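/- arXiv:1110.5868 — 2 statements merged into one kernel-verified Lean document; each statement's English description precedes it below -/
import Mathlib

section
/- The formal power series identity ∑_{r≥0} B_r(t) s^r = 1/((−1+t)(s − st − st² + st³ + ts² − 1 + 4t − 6t² + 4t³ − t⁴)) holds, where B_r(t) = D_r(t)/(1−t)^{5+2r} and D_r are the Delannoy polynomials. -/
open PowerSeries

/-- The Delannoy polynomials over `ℚ`. -/
noncomputable def delannoyPoly : ℕ → Polynomial ℚ
  | 0 => 1
  | 1 => 1 + Polynomial.X
  | n + 2 => (1 + Polynomial.X) * delannoyPoly (n + 1) + Polynomial.X * delannoyPoly n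

/-- The rational function `t` (the variable of `ℚ(t)`). -/
noncomputable def tvar : RatFunc ℚ := RatFunc.X

/-- `B r = D r / (1-t)^(5+2r)` as a rational function. -/
noncomputable def Bfun (r : ℕ) : RatFunc ℚ :=
  algebraMap (Polynomial ℚ) (RatFunc ℚ) (delannoyPoly r) / (1 - RatFunc.X) ^ (5 + 2 * r)

/-! With `u = 1 - t`, the denominator factors as `u⁵ (1 - p s - q s²)` where
`p = (1 + t)/u²` and `q = t/u⁴`. The Delannoy recurrence, rescaled by `u⁻²` per step, says
`B (r+2) = p B (r+1) + q B r`, and `B 1 = p B 0`, so multiplying `∑ B r sʳ` by `1 - p s - q s²`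
leaves only `B 0 = u⁻⁵`. -/

theorem PowerSeries.mk_mul_one_sub_X_sub_X_sq {R : Type*} [CommRing R] {a : ℕ → R} (p q : R)
    (h : ∀ n, a (n + 2) = p * a (n + 1) + q * a n) :
    mk a * (1 - C p * X - C q * X ^ 2) = C (a 0) + C (a 1 - p * a 0) * X := by
  ext (_ | _ | n) <;> simp [mul_sub, ← mul_assoc, coeff_mul_X_pow', coeff_succ_mul_X, h] <;> ring

theorem RatFunc.one_sub_X_ne_zero (K : Type*) [Field K] : (1 - RatFunc.X : RatFunc K) ≠ 0 := by
  rw [← neg_ne_zero, neg_sub]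
  simpa using
    (map_ne_zero_iff _ (RatFunc.algebraMap_injective K)).2 (Polynomial.X_sub_C_ne_zero (1 : K))

theorem Bfun_add_two (n : ℕ) :
    Bfun (n + 2) = (1 + tvar) / (1 - tvar) ^ 2 * Bfun (n + 1) + tvar / (1 - tvar) ^ 4 * Bfun n := by
  have hu := RatFunc.one_sub_X_ne_zero ℚ
  simp only [Bfun, tvar, delannoyPoly, map_add, map_mul, map_one, RatFunc.algebraMap_X]
  field_simp
  ring

/-- The generating function identity
`∑_{r≥0} B_r(t) s^r = 1/((−1+t)(s − st − st² + st³ + ts² − 1 + 4t − 6t² + 4t³ − t⁴))`,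
stated as: the product of the power series `∑ B_r s^r` with the denominator equals `1`,
in the ring of formal power series in `s` with coefficients in `ℚ(t)`. -/
theorem Bfun_generating_function :
    (PowerSeries.mk fun r => Bfun r) *
      (PowerSeries.C (-1 + tvar) *
        (PowerSeries.C (1 - tvar - tvar ^ 2 + tvar ^ 3) * PowerSeries.X +
          PowerSeries.C tvar * PowerSeries.X ^ 2 +
          PowerSeries.C
            (-1 + 4 * tvar - 6 * tvar ^ 2 + 4 * tvar ^ 3 - tvar ^ 4))) = 1 := by
  have hu : 1 - tvar ≠ 0 := RatFunc.one_sub_X_ne_zero ℚ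
  set p := (1 + tvar) / (1 - tvar) ^ 2
  set q := tvar / (1 - tvar) ^ 4
  have hp : C p * C (1 - tvar) ^ 2 = C (1 + tvar) := by
    rw [← map_pow, ← map_mul]
    exact congrArg C (div_mul_cancel₀ _ (pow_ne_zero 2 hu))
  have hq : C q * C (1 - tvar) ^ 4 = C tvar := by
    rw [← map_pow, ← map_mul]
    exact congrArg C (div_mul_cancel₀ _ (pow_ne_zero 4 hu))
  have hfactor : C (-1 + tvar) *
        (C (1 - tvar - tvar ^ 2 + tvar ^ 3) * X + C tvar * X ^ 2 +
          C (-1 + 4 * tvar - 6 * tvar ^ 2 + 4 * tvar ^ 3 - tvar ^ 4)) =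
      (1 - C p * X - C q * X ^ 2) * C (1 - tvar) ^ 5 := by
    simp only [map_add, map_sub, map_mul, map_pow, map_neg, map_one, map_ofNat] at hp hq ⊢
    linear_combination (1 - C tvar) ^ 3 * X * hp + (1 - C tvar) * X ^ 2 * hq
  have hinit : Bfun 1 - p * Bfun 0 = 0 := by
    simp only [Bfun, p, tvar, delannoyPoly, map_add, map_one, RatFunc.algebraMap_X]
    field_simp
    ring
  rw [hfactor, ← mul_assoc, mk_mul_one_sub_X_sub_X_sq p q Bfun_add_two, hinit, map_zero,
    zero_mul, add_zero, ← map_pow, ← map_mul, ← map_one C]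
  congr 1
  simp only [Bfun, delannoyPoly, map_one, mul_zero, add_zero]
  exact one_div_mul_cancel (pow_ne_zero 5 hu)
end

section
/- The number of multichains of length k in the 8-element interval [(0),(5)] of the spinor weight poset E (which consists of (0)<(12)<(13), then (13) covered by both (14) and (23), both covered by (24), then (24)<(34)<(5)) equals the coefficient of t^k in (1−t²)/(1−t)^8 = (1+t)/(1−t)^7. -/
/-- The 16 weights of the spinor representation of Spin(10):
`(0)`, `(ij)` for `1 ≤ i < j ≤ 5`, and `(k)` for `1 ≤ k ≤ 5`. -/
inductive SpinE : Type
  | e0 | e12 | e13 | e14 | e15 | e23 | e24 | e25 | e34 | e35 | e45 | e5 | e4 | e3 | e2 | e1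
  deriving DecidableEq

open SpinE

/-- The covering relations of the Hasse diagram of the spinor weight poset `E`. -/
inductive SpinCov : SpinE → SpinE → Prop
  | c1 : SpinCov e0 e12
  | c2 : SpinCov e12 e13
  | c3 : SpinCov e13 e23
  | c4 : SpinCov e13 e14
  | c5 : SpinCov e23 e24
  | c6 : SpinCov e14 e24
  | c7 : SpinCov e14 e15
  | c8 : SpinCov e24 e34
  | c9 : SpinCov e24 e25
  | c10 : SpinCov e15 e25
  | c11 : SpinCov e34 e5
  | c12 : SpinCov e34 e35
  | c13 : SpinCov e25 e35
  | c14 : SpinCov e5 e4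
  | c15 : SpinCov e35 e4
  | c16 : SpinCov e35 e45
  | c17 : SpinCov e4 e3
  | c18 : SpinCov e45 e3
  | c19 : SpinCov e3 e2
  | c20 : SpinCov e2 e1

/-- The partial order on `SpinE` is the reflexive-transitive closure of the
covering relations. -/
instance : Preorder SpinE where
  le := Relation.ReflTransGen SpinCov
  le_refl _ := Relation.ReflTransGen.refl
  le_trans _ _ _ := Relation.ReflTransGen.trans

open SpinE

/-- The number of multichains of length `k` in the 8-element interval `[(0),(5)]`. -/
noncomputable def quadricMultichainCount (k : ℕ) : ℕ :=
  Nat.card {f : Fin k → SpinE //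
    (∀ i j : Fin k, i ≤ j → f i ≤ f j) ∧ ∀ i, f i ∈ Set.Icc e0 e5}

/-!
Read off the Hasse diagram, `[(0),(5)]` is the chain
`(0) < (12) < (13) < (14) < (23) < (24) < (34) < (5)` with the one relation `(14) < (23)` removed.
A multichain is determined by the multiset of its entries, so the multichains of length `k` are
the `k`-multisets on these 8 points that do not contain both `(14)` and `(23)`. All `k`-multisets
on 8 points have generating function `1/(1-t)^8`; adjoining `(14)` and `(23)` to a
`(k-2)`-multiset gives exactly the excluded ones, whence the factor `1 - t²`.
-/

open PowerSeries

section Multisets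

variable {α : Type*}

theorem Sym.two_le_of_mem_of_mem {n : ℕ} {s : Sym α n} {a b : α} (hab : a ≠ b) (ha : a ∈ s)
    (hb : b ∈ s) : 2 ≤ n := by
  classical
  calc 2 = ({a, b} : Finset α).card := (Finset.card_pair hab).symm
    _ ≤ (s : Multiset α).toFinset.card :=
        Finset.card_le_card (by simp [Finset.insert_subset_iff, Sym.mem_coe, ha, hb])
    _ ≤ Multiset.card (s : Multiset α) := Multiset.toFinset_card_le _
    _ = n := s.2

theorem Sym.natCard_mem_and_mem {a b : α} (hab : a ≠ b) (k : ℕ) :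
    Nat.card {s : Sym α k // a ∈ s ∧ b ∈ s} = if 2 ≤ k then Nat.card (Sym α (k - 2)) else 0 := by
  split_ifs with hk
  · obtain ⟨m, rfl⟩ := Nat.exists_eq_add_of_le' hk
    have hbij : Function.Bijective fun t : Sym α m =>
        (⟨a ::ₛ b ::ₛ t, Sym.mem_cons_self a _, Sym.mem_cons_of_mem (Sym.mem_cons_self b t)⟩ :
          {s : Sym α (m + 2) // a ∈ s ∧ b ∈ s}) := by
      refine ⟨fun t t' h => ?_, fun ⟨s, ha, hb⟩ => ?_⟩
      · simpa only [Subtype.mk.injEq, Sym.cons_inj_right] using h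
      · obtain ⟨s', rfl⟩ := Sym.exists_cons_of_mem ha
        obtain ⟨t, rfl⟩ := Sym.exists_cons_of_mem ((Sym.mem_cons.1 hb).resolve_left hab.symm)
        exact ⟨t, rfl⟩
    simpa using (Nat.card_eq_of_bijective _ hbij).symm
  · have : IsEmpty {s : Sym α k // a ∈ s ∧ b ∈ s} :=
      ⟨fun s => hk (Sym.two_le_of_mem_of_mem hab s.2.1 s.2.2)⟩
    exact Nat.card_of_isEmpty

variable (α) in
noncomputable def monotoneFinEquivSym [LinearOrder α] (k : ℕ) :
    {f : Fin k → α // Monotone f} ≃ Sym α k :=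
  Equiv.ofBijective (fun f => ⟨List.ofFn f.1, by simp⟩) <| by
    refine ⟨fun f g h => ?_, fun s => ?_⟩
    · have hperm : (List.ofFn f.1).Perm (List.ofFn g.1) :=
        Multiset.coe_eq_coe.1 (congrArg Subtype.val h)
      exact Subtype.ext (List.ofFn_injective
        (hperm.eq_of_sortedLE (List.sortedLE_ofFn_iff.2 f.2) (List.sortedLE_ofFn_iff.2 g.2)))
    · set l := (s : Multiset α).sort
      have hl : l.length = k := (Multiset.length_sort _).trans s.2
      refine ⟨⟨fun i => l[i.cast hl.symm], fun i j hij => ?_⟩, Sym.coe_injective ?_⟩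
      · exact List.sortedLE_iff_monotone_get.1 (Multiset.pairwise_sort _ _).sortedLE hij
      · change ((List.ofFn fun i : Fin k => l[i.cast hl.symm] : List α) : Multiset α) = s
        have hofFn : List.ofFn (fun i : Fin k => l[i.cast hl.symm]) = l :=
          List.ext_getElem (by simp [hl]) (by simp)
        rw [hofFn, Multiset.sort_eq]

theorem mem_monotoneFinEquivSym [LinearOrder α] {k : ℕ} {f : {f : Fin k → α // Monotone f}}
    {a : α} : a ∈ monotoneFinEquivSym α k f ↔ a ∈ Set.range f.1 := by
  rw [← Sym.mem_coe]
  exact (Multiset.mem_coe).trans List.mem_ofFn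

end Multisets

theorem natCard_subtype_comp_of_injective {ι α β : Type*} {e : α → β} (he : Function.Injective e)
    (P : (ι → β) → Prop) :
    Nat.card {g : ι → α // P (e ∘ g)} = Nat.card {f : ι → β // P f ∧ ∀ i, f i ∈ Set.range e} := by
  refine Nat.card_eq_of_bijective (fun g => ⟨e ∘ g.1, g.2, fun i => ⟨g.1 i, rfl⟩⟩)
    ⟨fun g h hgh => Subtype.ext (he.comp_left (congrArg Subtype.val hgh)), fun f => ?_⟩
  choose g hg using f.2.2
  have hgf : e ∘ g = f.1 := funext hg
  exact ⟨⟨g, hgf ▸ f.2.1⟩, Subtype.ext hgf⟩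

/-- `he` says that `e` embeds the linear order `α` with the single relation `x < y` forgotten. -/
theorem monotone_comp_iff_of_forget_pair {ι α β : Type*} [LinearOrder ι] [LinearOrder α]
    [Preorder β] {e : α → β} {x y : α} (hxy : x < y)
    (he : ∀ a b, e a ≤ e b ↔ a ≤ b ∧ ¬(a = x ∧ b = y)) {g : ι → α} :
    Monotone (e ∘ g) ↔ Monotone g ∧ ¬(x ∈ Set.range g ∧ y ∈ Set.range g) := by
  simp only [Monotone, Function.comp_apply, he]
  refine ⟨fun h => ⟨fun i j hij => (h hij).1, ?_⟩, fun ⟨hg, hxy'⟩ i j hij => ⟨hg hij, ?_⟩⟩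
  · rintro ⟨⟨i, rfl⟩, ⟨j, rfl⟩⟩
    rcases le_total i j with hij | hji
    · exact (h hij).2 ⟨rfl, rfl⟩
    · exact (h hji).1.not_gt hxy
  · rintro ⟨rfl, rfl⟩
    exact hxy' ⟨⟨i, rfl⟩, ⟨j, rfl⟩⟩

theorem mk_natCard_sym_mul_one_sub_X_pow (R : Type*) [CommRing R] (α : Type*) [Fintype α] :
    mk (fun k => (Nat.card (Sym α k) : R)) * (1 - X) ^ Fintype.card α = 1 := by
  classical
  simp only [Nat.card_eq_fintype_card, Sym.card_sym_eq_choose]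
  cases h : Fintype.card α with
  | zero =>
    ext (_ | n) <;> simp [coeff_one]
  | succ d =>
    have hmk : mk (fun k => ((d + 1 + k - 1).choose k : R)) = (invOneSubPow R (d + 1)).val := by
      ext n
      simp [invOneSubPow, ← Nat.choose_symm_add]
    rw [hmk, ← invOneSubPow_inv_eq_one_sub_pow]
    exact (invOneSubPow R (d + 1)).val_inv

theorem mk_natCard_sym_not_mem_and_mem (R : Type*) [CommRing R] {α : Type*} [Finite α] {a b : α}
    (hab : a ≠ b) :
    mk (fun k => (Nat.card {s : Sym α k // ¬(a ∈ s ∧ b ∈ s)} : R)) =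
      (1 - X ^ 2) * mk fun k => (Nat.card (Sym α k) : R) := by
  classical
  ext k
  have hsplit : Nat.card {s : Sym α k // a ∈ s ∧ b ∈ s} +
      Nat.card {s : Sym α k // ¬(a ∈ s ∧ b ∈ s)} = Nat.card (Sym α k) := by
    rw [← Nat.card_sum, Nat.card_congr (Equiv.sumCompl _)]
  rw [coeff_mk, sub_mul, one_mul, map_sub, coeff_mk, coeff_X_pow_mul', eq_sub_iff_add_eq',
    ← hsplit, Sym.natCard_mem_and_mem hab]
  split_ifs <;> simp [coeff_mk]

/-- `(ij)` and `(k)` stand for the subsets `{i, j}` and `{1, …, 5} ∖ {k}`, shifted into `Fin 5`. -/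
def weightSet : SpinE → Finset (Fin 5)
  | e0 => ∅ | e12 => {0, 1} | e13 => {0, 2} | e14 => {0, 3} | e15 => {0, 4}
  | e23 => {1, 2} | e24 => {1, 3} | e25 => {1, 4} | e34 => {2, 3} | e35 => {2, 4}
  | e45 => {3, 4} | e5 => {0, 1, 2, 3} | e4 => {0, 1, 2, 4} | e3 => {0, 1, 3, 4}
  | e2 => {0, 2, 3, 4} | e1 => {1, 2, 3, 4}

/-- Tail counts of `weightSet x`; they certify the non-relations of `E` used below. -/
def dominance (x : SpinE) (m : Fin 5) : ℕ := ((weightSet x).filter (m ≤ ·)).card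

theorem monotone_dominance : Monotone dominance := by
  intro x y h
  induction h with
  | refl => exact le_rfl
  | tail _ hcov ih => exact ih.trans (by rw [Pi.le_def]; cases hcov <;> decide)

def linExt : Fin 8 → SpinE := ![e0, e12, e13, e14, e23, e24, e34, e5]

theorem linExt_injective : Function.Injective linExt := by decide

theorem linExt_le_linExt_iff (a b : Fin 8) : linExt a ≤ linExt b ↔ a ≤ b ∧ ¬(a = 3 ∧ b = 4) := by
  constructor
  · have hdom : ∀ a b : Fin 8, dominance (linExt a) ≤ dominance (linExt b) →
        a ≤ b ∧ ¬(a = 3 ∧ b = 4) := by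
      simp only [Pi.le_def]
      decide
    exact fun h => hdom a b (monotone_dominance h)
  · have h01 : e0 ≤ e12 := .single .c1
    have h12 : e12 ≤ e13 := .single .c2
    have h23 : e13 ≤ e14 := .single .c4
    have h24 : e13 ≤ e23 := .single .c3
    have h35 : e14 ≤ e24 := .single .c6
    have h45 : e23 ≤ e24 := .single .c5
    have h56 : e24 ≤ e34 := .single .c8
    have h67 : e34 ≤ e5 := .single .c11
    intro h
    fin_cases a <;> fin_cases b <;> simp [linExt] at h ⊢ <;> order

theorem range_linExt : Set.range linExt = Set.Icc e0 e5 := by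
  ext x
  constructor
  · rintro ⟨a, rfl⟩
    exact ⟨(linExt_le_linExt_iff 0 a).2 ⟨Fin.zero_le a, by simp⟩,
      (linExt_le_linExt_iff a 7).2 ⟨Fin.le_last a, by simp⟩⟩
  · have hdom : dominance x ≤ dominance e5 → x ∈ Set.range linExt := by
      rw [Pi.le_def]
      cases x <;> decide
    exact fun hx => hdom (monotone_dominance hx.2)

theorem quadricMultichainCount_eq_natCard_sym (k : ℕ) :
    quadricMultichainCount k = Nat.card {s : Sym (Fin 8) k // ¬((3 : Fin 8) ∈ s ∧ 4 ∈ s)} := by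
  rw [quadricMultichainCount, ← range_linExt, ← natCard_subtype_comp_of_injective linExt_injective]
  refine Nat.card_congr <| (Equiv.subtypeEquivRight fun g =>
    monotone_comp_iff_of_forget_pair (by decide) linExt_le_linExt_iff).trans ?_
  exact (Equiv.subtypeSubtypeEquivSubtypeInter _ _).symm.trans
    ((monotoneFinEquivSym (Fin 8) k).subtypeEquiv fun f => by
      simp only [mem_monotoneFinEquivSym])

/-- The number of multichains of length `k` in the interval `[(0),(5)]` of `E`
equals the coefficient of `t^k` in `(1−t²)/(1−t)^8 = (1+t)/(1−t)^7`. -/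
theorem spinE_interval_e0_e5_multichains :
    (PowerSeries.mk fun k => (quadricMultichainCount k : ℚ)) * (1 - PowerSeries.X) ^ 8 =
      1 - PowerSeries.X ^ 2 := by
  have hsym := mk_natCard_sym_mul_one_sub_X_pow ℚ (Fin 8)
  rw [Fintype.card_fin] at hsym
  simp_rw [quadricMultichainCount_eq_natCard_sym]
  rw [mk_natCard_sym_not_mem_and_mem ℚ (by decide : (3 : Fin 8) ≠ 4), mul_assoc, hsym, mul_one]
end
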